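/- Consider the doubly warped metric g = dr² + ω(r,t)²dt² + β(r)²ds²_n on B × S^n with B = (0,b₁) × (0,b₂), n ≥ 2, with smooth positive warping functions β(r) and ω(r,t). Suppose on the relevant region: β > 0, β_r² ≤ 1, β_{rr} ≤ 0, ω_{rr} ≤ 0, and β_r ω_r ≤ 0 pointwise. Then for every p with 0 ≤ p ≤ n-2 and every p-plane P in the tangent space at any point, s_{p,n+2}(P) ≥ (n-p)(n-p-1)(1-β_r²)/β² ≥ 0; in particular if additionally (1-β_r²)/β² > 0, then g has positive (p,n+2)-intermediate scalar curvature. -/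

import Mathlib

/-!
Dropping the time, radial and mixed terms, which are nonnegative under the sign conditions,
each sectional curvature is at least `c · (|Qv|²|Qw|² - ⟪Qv, Qw⟫²)` with `c = (1 - β_r²)/β²` and
`Q` the orthogonal projection onto the fiber coordinates. For an orthonormal frame `e₁, …, e_k`
put `t = ∑ |Qeᵢ|²`. Summing over pairs gives `t² - ∑ᵢⱼ ⟪Qeᵢ, Qeⱼ⟫²`, and Bessel's inequality
applied to each `Qeᵢ` bounds the last sum by `t`. Since `Q` only removes two coordinates, each of
Bessel mass at most `1` along the frame, `t ≥ k - 2`, so the sum is at least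
`(k - 2)(k - 3) = (n - p)(n - p - 1)` for `k = n + 2 - p`.
-/

open Module

/-- Sectional curvature of the doubly warped metric `dr² + ω(r,t)² dt² + β(r)² ds²_n`
on `(0,b₁) × (0,b₂) × S^n`, in an orthonormal frame with index `0` the radial direction
`∂_r`, index `1` the normalized `∂_t` direction, and indices `i ≥ 2` normalized fiber
directions, evaluated at the base point `(r,t)`. -/
noncomputable def dwK (n : ℕ) (β : ℝ → ℝ) (ω : ℝ → ℝ → ℝ) (r t : ℝ)
    (v w : EuclideanSpace ℝ (Fin (n + 2))) : ℝ :=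
  -(deriv (fun x => deriv (fun y => ω y t) x) r / ω r t) *
      (v 1 * w 0 - v 0 * w 1) ^ 2 +
    ((1 - (deriv β r) ^ 2) / (β r) ^ 2) *
      (∑ i : Fin (n + 2), ∑ j : Fin (n + 2),
        if 1 < i ∧ i < j then (v i * w j - v j * w i) ^ 2 else 0) -
    (deriv (deriv β) r / β r) *
      (∑ i : Fin (n + 2), if 1 < i then (v i * w 0 - w i * v 0) ^ 2 else 0) -
    (deriv β r * deriv (fun x => ω x t) r / (β r * ω r t)) *
      (∑ i : Fin (n + 2), if 1 < i then (v i * w 1 - w i * v 1) ^ 2 else 0)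

/-- `∑_{i ≠ j} K (e i) (e j)`: the `(p,n+2)`-intermediate scalar curvature when `e`
is an orthonormal basis of the orthogonal complement of a `p`-plane. -/
noncomputable def sSum {m k : ℕ}
    (K : EuclideanSpace ℝ (Fin m) → EuclideanSpace ℝ (Fin m) → ℝ)
    (e : Fin k → EuclideanSpace ℝ (Fin m)) : ℝ :=
  ∑ i : Fin k, ∑ j : Fin k, if i ≠ j then K (e i) (e j) else 0

open Finset RealInnerProductSpace

theorem lagrange_identity {ι : Type*} [Fintype ι] [LinearOrder ι] (v w : ι → ℝ) :
    ∑ a, ∑ b, (if a < b then (v a * w b - v b * w a) ^ 2 else 0) =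
      (∑ a, v a ^ 2) * (∑ a, w a ^ 2) - (∑ a, v a * w a) ^ 2 := by
  set X : ι → ι → ℝ := fun a b => (v a * w b - v b * w a) ^ 2
  have hsplit : ∀ a b, X a b = (if a < b then X a b else 0) + (if b < a then X b a else 0) := by
    intro a b
    rcases lt_trichotomy a b with h | rfl | h
    · simp [h, h.not_gt]
    · simp [X]
    · simp only [h, h.not_gt, if_true, if_false, zero_add, X]
      ring
  have hexpand : ∀ a b,
      X a b = v a ^ 2 * w b ^ 2 + w a ^ 2 * v b ^ 2 - 2 * (v a * w a * (v b * w b)) :=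
    fun a b => by ring
  have hfull :
      ∑ a, ∑ b, X a b = 2 * ((∑ a, v a ^ 2) * (∑ a, w a ^ 2) - (∑ a, v a * w a) ^ 2) := by
    simp only [hexpand, sum_add_distrib, sum_sub_distrib, ← mul_sum, ← sum_mul]
    ring
  conv_lhs at hfull => enter [2, a, 2, b]; rw [hsplit]
  simp only [sum_add_distrib] at hfull
  rw [sum_comm (f := fun a b => if b < a then X b a else 0)] at hfull
  change ∑ a, ∑ b, (if a < b then X a b else 0) = _
  linarith

theorem Orthonormal.mul_sub_one_le_sum_norm_sq_mul_sub_inner_sq {E ι : Type*}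
    [NormedAddCommGroup E] [InnerProductSpace ℝ E] [Fintype ι] {e : ι → E}
    (he : Orthonormal ℝ e) (Q : E → E) (hQ : ∀ v w, ⟪Q v, Q w⟫ = ⟪Q v, w⟫) :
    (∑ i, ‖Q (e i)‖ ^ 2) * ((∑ i, ‖Q (e i)‖ ^ 2) - 1) ≤
      ∑ i, ∑ j, (‖Q (e i)‖ ^ 2 * ‖Q (e j)‖ ^ 2 - ⟪Q (e i), Q (e j)⟫ ^ 2) := by
  have hbessel : ∑ i, ∑ j, ⟪Q (e i), Q (e j)⟫ ^ 2 ≤ ∑ i, ‖Q (e i)‖ ^ 2 :=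
    sum_le_sum fun i _ => by
      simpa [hQ, real_inner_comm, Real.norm_eq_abs, sq_abs] using
        he.sum_inner_products_le (Q (e i)) (s := univ)
  rw [mul_sub_one, sum_mul_sum]
  simp only [sum_sub_distrib]
  linarith

theorem Orthonormal.sum_sq_apply_le {ι κ : Type*} [Fintype ι] [Fintype κ]
    {e : ι → EuclideanSpace ℝ κ} (he : Orthonormal ℝ e) (a : κ) :
    ∑ i, e i a ^ 2 ≤ 1 := by
  classical
  simpa [EuclideanSpace.inner_single_right, Real.norm_eq_abs, sq_abs] using
    he.sum_inner_products_le (EuclideanSpace.single a (1 : ℝ)) (s := univ)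

def fiberPart {n : ℕ} (v : EuclideanSpace ℝ (Fin (n + 2))) : EuclideanSpace ℝ (Fin (n + 2)) :=
  WithLp.toLp 2 fun a => if 1 < a then v a else 0

theorem inner_fiberPart_fiberPart {n : ℕ} (v w : EuclideanSpace ℝ (Fin (n + 2))) :
    ⟪fiberPart v, fiberPart w⟫ = ⟪fiberPart v, w⟫ := by
  simp only [fiberPart, PiLp.inner_apply]
  refine sum_congr rfl fun a _ => ?_
  split_ifs <;> simp

theorem norm_fiberPart_sq {n : ℕ} (v : EuclideanSpace ℝ (Fin (n + 2))) :
    ‖fiberPart v‖ ^ 2 = ‖v‖ ^ 2 - v 0 ^ 2 - v 1 ^ 2 := by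
  have hfiber : ∀ a : Fin n, (1 : Fin (n + 2)) < a.succ.succ := fun a => by
    rw [Fin.lt_def]; simp
  simp [EuclideanSpace.norm_sq_eq, fiberPart, Fin.sum_univ_succ, hfiber]

def fiberAreaSq (n : ℕ) (v w : EuclideanSpace ℝ (Fin (n + 2))) : ℝ :=
  ∑ i : Fin (n + 2), ∑ j : Fin (n + 2),
    if 1 < i ∧ i < j then (v i * w j - v j * w i) ^ 2 else 0

theorem fiberAreaSq_self {n : ℕ} (v : EuclideanSpace ℝ (Fin (n + 2))) :
    fiberAreaSq n v v = 0 := by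
  simp [fiberAreaSq, mul_comm]

theorem fiberAreaSq_eq {n : ℕ} (v w : EuclideanSpace ℝ (Fin (n + 2))) :
    fiberAreaSq n v w =
      ‖fiberPart v‖ ^ 2 * ‖fiberPart w‖ ^ 2 - ⟪fiberPart v, fiberPart w⟫ ^ 2 := by
  set x := fiberPart v
  set y := fiberPart w
  have hmask : ∀ a b : Fin (n + 2),
      (if 1 < a ∧ a < b then (v a * w b - v b * w a) ^ 2 else 0) =
        if a < b then (x a * y b - x b * y a) ^ 2 else 0 := by
    intro a b
    by_cases hab : a < b
    · by_cases ha : 1 < a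
      · simp [x, y, fiberPart, ha, hab, ha.trans hab]
      · simp [x, y, fiberPart, ha, hab]
    · simp [hab]
  rw [fiberAreaSq, sum_congr rfl fun a _ => sum_congr rfl fun b _ => hmask a b,
    lagrange_identity]
  simp [EuclideanSpace.norm_sq_eq, PiLp.inner_apply, mul_comm]

theorem Orthonormal.card_sub_two_mul_card_sub_three_le_sum_fiberAreaSq {ι : Type*} [Fintype ι]
    {n : ℕ} {e : ι → EuclideanSpace ℝ (Fin (n + 2))} (he : Orthonormal ℝ e)
    (hcard : 3 ≤ Fintype.card ι) :
    ((Fintype.card ι : ℝ) - 2) * ((Fintype.card ι : ℝ) - 3) ≤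
      ∑ i, ∑ j, fiberAreaSq n (e i) (e j) := by
  set t := ∑ i, ‖fiberPart (e i)‖ ^ 2
  have ht : (Fintype.card ι : ℝ) - 2 ≤ t := by
    have h0 := he.sum_sq_apply_le 0
    have h1 := he.sum_sq_apply_le 1
    simp only [t, norm_fiberPart_sq, he.norm_eq_one, sum_sub_distrib]
    simp only [one_pow, sum_const, card_univ, nsmul_eq_mul, mul_one]
    linarith
  have hcard' : (3 : ℝ) ≤ Fintype.card ι := by exact_mod_cast hcard
  have hfiber := he.mul_sub_one_le_sum_norm_sq_mul_sub_inner_sq fiberPart inner_fiberPart_fiberPart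
  simp only [fiberAreaSq_eq]
  nlinarith [mul_nonneg (sub_nonneg.2 ht) (by linarith : (0 : ℝ) ≤ t + Fintype.card ι - 3)]

theorem mul_sSum_le_sSum {m k : ℕ}
    {K K' : EuclideanSpace ℝ (Fin m) → EuclideanSpace ℝ (Fin m) → ℝ} {c : ℝ}
    (h : ∀ v w, c * K v w ≤ K' v w) (e : Fin k → EuclideanSpace ℝ (Fin m)) :
    c * sSum K e ≤ sSum K' e := by
  simp only [sSum, mul_sum]
  gcongr with i _ j _
  split_ifs
  · exact h _ _
  · simp

theorem sSum_eq_sum_sum {m k : ℕ} {K : EuclideanSpace ℝ (Fin m) → EuclideanSpace ℝ (Fin m) → ℝ}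
    (hK : ∀ v, K v v = 0) (e : Fin k → EuclideanSpace ℝ (Fin m)) :
    sSum K e = ∑ i, ∑ j, K (e i) (e j) := by
  refine sum_congr rfl fun i _ => sum_congr rfl fun j _ => ?_
  split_ifs with hij
  · rfl
  · rw [not_ne_iff.1 hij, hK]

theorem mul_fiberAreaSq_le_dwK {n : ℕ} {β : ℝ → ℝ} {ω : ℝ → ℝ → ℝ} {r t : ℝ}
    (hβ : 0 < β r) (hω : 0 < ω r t) (hβrr : deriv (deriv β) r ≤ 0)
    (hωrr : deriv (fun x => deriv (fun y => ω y t) x) r ≤ 0)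
    (hβω : deriv β r * deriv (fun x => ω x t) r ≤ 0) (v w : EuclideanSpace ℝ (Fin (n + 2))) :
    (1 - deriv β r ^ 2) / β r ^ 2 * fiberAreaSq n v w ≤ dwK n β ω r t v w := by
  have hsum : ∀ u : Fin (n + 2) → ℝ, 0 ≤ ∑ i : Fin (n + 2), if 1 < i then u i ^ 2 else 0 :=
    fun u => sum_nonneg fun i _ => by split_ifs <;> positivity
  have htime : 0 ≤ -(deriv (fun x => deriv (fun y => ω y t) x) r / ω r t) *
      (v 1 * w 0 - v 0 * w 1) ^ 2 :=
    mul_nonneg (neg_nonneg.2 (div_nonpos_of_nonpos_of_nonneg hωrr hω.le)) (sq_nonneg _)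
  have hradial := mul_nonpos_of_nonpos_of_nonneg (div_nonpos_of_nonpos_of_nonneg hβrr hβ.le)
    (hsum fun i => v i * w 0 - w i * v 0)
  have hmixed := mul_nonpos_of_nonpos_of_nonneg
    (div_nonpos_of_nonpos_of_nonneg hβω (mul_pos hβ hω).le) (hsum fun i => v i * w 1 - w i * v 1)
  rw [dwK, ← fiberAreaSq]
  linarith

theorem doubly_warped_intermediate_curvature_bound_general (n p : ℕ) (hn : 2 ≤ n)
    (hp : p ≤ n - 2) (b₁ b₂ : ℝ)
    (β : ℝ → ℝ) (ω : ℝ → ℝ → ℝ)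
    (hβ : ∀ r ∈ Set.Ioo (0 : ℝ) b₁, 0 < β r)
    (hω : ∀ r ∈ Set.Ioo (0 : ℝ) b₁, ∀ t ∈ Set.Ioo (0 : ℝ) b₂, 0 < ω r t)
    (hβr : ∀ r ∈ Set.Ioo (0 : ℝ) b₁, (deriv β r) ^ 2 ≤ 1)
    (hβrr : ∀ r ∈ Set.Ioo (0 : ℝ) b₁, deriv (deriv β) r ≤ 0)
    (hωrr : ∀ r ∈ Set.Ioo (0 : ℝ) b₁, ∀ t ∈ Set.Ioo (0 : ℝ) b₂,
      deriv (fun x => deriv (fun y => ω y t) x) r ≤ 0)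
    (hβω : ∀ r ∈ Set.Ioo (0 : ℝ) b₁, ∀ t ∈ Set.Ioo (0 : ℝ) b₂,
      deriv β r * deriv (fun x => ω x t) r ≤ 0) :
    ∀ r ∈ Set.Ioo (0 : ℝ) b₁, ∀ t ∈ Set.Ioo (0 : ℝ) b₂,
      ∀ P : Submodule ℝ (EuclideanSpace ℝ (Fin (n + 2))), finrank ℝ P = p →
        ∀ e : Fin (n + 2 - p) → EuclideanSpace ℝ (Fin (n + 2)),
          Orthonormal ℝ e → (∀ i, e i ∈ Pᗮ) →
            ((n - p : ℕ) : ℝ) * ((n - p - 1 : ℕ) : ℝ) *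
                ((1 - (deriv β r) ^ 2) / (β r) ^ 2) ≤ sSum (dwK n β ω r t) e ∧
              (0 < (1 - (deriv β r) ^ 2) / (β r) ^ 2 →
                0 < sSum (dwK n β ω r t) e) := by
  intro r hr t ht _ _ e he _
  set c := (1 - deriv β r ^ 2) / β r ^ 2
  have hc : 0 ≤ c := div_nonneg (sub_nonneg.2 (hβr r hr)) (sq_nonneg _)
  have hframe : ((n - p : ℕ) : ℝ) * ((n - p - 1 : ℕ) : ℝ) ≤ sSum (fiberAreaSq n) e := by
    have hsum := he.card_sub_two_mul_card_sub_three_le_sum_fiberAreaSq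
      (by rw [Fintype.card_fin]; omega)
    have hk : ((n + 2 - p : ℕ) : ℝ) = (n - p : ℕ) + 2 := by
      exact_mod_cast (by omega : n + 2 - p = n - p + 2)
    rw [Fintype.card_fin, hk] at hsum
    rw [sSum_eq_sum_sum fiberAreaSq_self, Nat.cast_sub (by omega : 1 ≤ n - p), Nat.cast_one]
    convert hsum using 1
    ring
  have hcurv : c * sSum (fiberAreaSq n) e ≤ sSum (dwK n β ω r t) e :=
    mul_sSum_le_sSum (mul_fiberAreaSq_le_dwK (hβ r hr) (hω r hr t ht) (hβrr r hr)
      (hωrr r hr t ht) (hβω r hr t ht)) e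
  have hbound : ((n - p : ℕ) : ℝ) * ((n - p - 1 : ℕ) : ℝ) * c ≤ sSum (dwK n β ω r t) e := by
    rw [mul_comm _ c]
    exact (mul_le_mul_of_nonneg_left hframe hc).trans hcurv
  refine ⟨hbound, fun hpos => lt_of_lt_of_le ?_ hbound⟩
  have hnp : (0 : ℝ) < (n - p : ℕ) := Nat.cast_pos.2 (by omega)
  have hnp1 : (0 : ℝ) < (n - p - 1 : ℕ) := Nat.cast_pos.2 (by omega)
  exact mul_pos (mul_pos hnp hnp1) hpos

/-- For the doubly warped metric `dr² + ω(r,t)² dt² + β(r)² ds²_n` with `n ≥ 2` and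
the sign conditions `β > 0`, `ω > 0`, `β_r² ≤ 1`, `β_rr ≤ 0`, `ω_rr ≤ 0` and
`β_r ω_r ≤ 0` pointwise on the region, every `p`-plane `P` with `0 ≤ p ≤ n-2`
satisfies `s_{p,n+2}(P) ≥ (n-p)(n-p-1)(1-β_r²)/β² ≥ 0`; if moreover
`(1-β_r²)/β² > 0` at the point, then `s_{p,n+2}(P) > 0`. -/
theorem doubly_warped_intermediate_curvature_bound (n p : ℕ) (hn : 2 ≤ n)
    (hp : p ≤ n - 2) (b₁ b₂ : ℝ) (hb₁ : 0 < b₁) (hb₂ : 0 < b₂)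
    (β : ℝ → ℝ) (ω : ℝ → ℝ → ℝ)
    (hβ : ∀ r ∈ Set.Ioo (0 : ℝ) b₁, 0 < β r)
    (hω : ∀ r ∈ Set.Ioo (0 : ℝ) b₁, ∀ t ∈ Set.Ioo (0 : ℝ) b₂, 0 < ω r t)
    (hβr : ∀ r ∈ Set.Ioo (0 : ℝ) b₁, (deriv β r) ^ 2 ≤ 1)
    (hβrr : ∀ r ∈ Set.Ioo (0 : ℝ) b₁, deriv (deriv β) r ≤ 0)
    (hωrr : ∀ r ∈ Set.Ioo (0 : ℝ) b₁, ∀ t ∈ Set.Ioo (0 : ℝ) b₂,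
      deriv (fun x => deriv (fun y => ω y t) x) r ≤ 0)
    (hβω : ∀ r ∈ Set.Ioo (0 : ℝ) b₁, ∀ t ∈ Set.Ioo (0 : ℝ) b₂,
      deriv β r * deriv (fun x => ω x t) r ≤ 0) :
    ∀ r ∈ Set.Ioo (0 : ℝ) b₁, ∀ t ∈ Set.Ioo (0 : ℝ) b₂,
      ∀ P : Submodule ℝ (EuclideanSpace ℝ (Fin (n + 2))), finrank ℝ P = p →
        ∀ e : Fin (n + 2 - p) → EuclideanSpace ℝ (Fin (n + 2)),
          Orthonormal ℝ e → (∀ i, e i ∈ Pᗮ) →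
            ((n - p : ℕ) : ℝ) * ((n - p - 1 : ℕ) : ℝ) *
                ((1 - (deriv β r) ^ 2) / (β r) ^ 2) ≤ sSum (dwK n β ω r t) e ∧
              (0 < (1 - (deriv β r) ^ 2) / (β r) ^ 2 →
                0 < sSum (dwK n β ω r t) e) :=
  doubly_warped_intermediate_curvature_bound_general n p hn hp b₁ b₂ β ω hβ hω hβr hβrr hωrr hβω
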